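/- Let s̄ ∈ ℝ^p, t > 0, γ > 0, and let M(𝕄) be a structured sparsity model for a finite nonempty collection 𝕄 of subsets of {1,…,p}. Then w* = P(−(√t/γ)s̄, S*) is a minimizer of w ↦ ⟨s̄, w⟩ + (γ/(2√t))‖w‖² over M(𝕄), where S* ∈ argmax_{S∈𝕄} ‖P(−(√t/γ)s̄, S)‖². -/

import Mathlib

open scoped RealInnerProductSpace

noncomputable def restrict {p : ℕ} (x : EuclideanSpace ℝ (Fin p)) (S : Finset (Fin p)) :
    EuclideanSpace ℝ (Fin p) :=
  WithLp.toLp 2 (fun i => if i ∈ S then x i else 0)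

/-! Completing the square turns the objective into `k * (‖w - v‖² - ‖v‖²)` with `k = γ/(2√t)`
and `v = -(√t/γ) • s̄`, so minimising it over `M(𝕄)` is a best approximation of `v` in a union
of coordinate subspaces. On the subspace of `S` the best approximation is `P(v, S)`, at squared
distance `‖v‖² - ‖P(v, S)‖²`, so the best subspace is the one capturing the most energy of `v`. -/

theorem inner_neg_smul_add_mul_norm_sq {E : Type*} [NormedAddCommGroup E] [InnerProductSpace ℝ E]
    (k : ℝ) (v w : E) :
    ⟪-(2 * k) • v, w⟫ + k * ‖w‖ ^ 2 = k * (‖w - v‖ ^ 2 - ‖v‖ ^ 2) := by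
  rw [norm_sub_sq_real, real_inner_smul_left, real_inner_comm]
  ring

section restrict

variable {p : ℕ} (x : EuclideanSpace ℝ (Fin p)) (S : Finset (Fin p))

theorem restrict_apply (i : Fin p) : restrict x S i = if i ∈ S then x i else 0 := rfl

theorem mem_of_restrict_apply_ne_zero {i : Fin p} (h : restrict x S i ≠ 0) : i ∈ S := by
  by_contra hi
  simp [restrict_apply, hi] at h

theorem norm_restrict_sub_sq : ‖restrict x S - x‖ ^ 2 = ‖x‖ ^ 2 - ‖restrict x S‖ ^ 2 := by
  simp only [EuclideanSpace.real_norm_sq_eq, ← Finset.sum_sub_distrib, PiLp.sub_apply,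
    restrict_apply]
  refine Finset.sum_congr rfl fun i _ => ?_
  split_ifs <;> ring

theorem norm_restrict_sub_sq_le {w : EuclideanSpace ℝ (Fin p)} (hw : ∀ i, w i ≠ 0 → i ∈ S) :
    ‖restrict x S - x‖ ^ 2 ≤ ‖w - x‖ ^ 2 := by
  simp only [EuclideanSpace.real_norm_sq_eq, PiLp.sub_apply, restrict_apply]
  refine Finset.sum_le_sum fun i _ => ?_
  split_ifs with hi
  · simpa using sq_nonneg (w i - x i)
  · rw [not_imp_comm.mp (hw i) hi]

theorem norm_restrict_sub_sq_le_of_norm_sq_le {S' : Finset (Fin p)}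
    (hS : ‖restrict x S'‖ ^ 2 ≤ ‖restrict x S‖ ^ 2) {w : EuclideanSpace ℝ (Fin p)}
    (hw : ∀ i, w i ≠ 0 → i ∈ S') :
    ‖restrict x S - x‖ ^ 2 ≤ ‖w - x‖ ^ 2 :=
  calc ‖restrict x S - x‖ ^ 2 ≤ ‖restrict x S' - x‖ ^ 2 := by
        rw [norm_restrict_sub_sq, norm_restrict_sub_sq]
        linarith
    _ ≤ ‖w - x‖ ^ 2 := norm_restrict_sub_sq_le x S' hw

end restrict

theorem stmt_11_general {p : ℕ} (sbar : EuclideanSpace ℝ (Fin p)) (t γ : ℝ) (ht : 0 < t) (hγ : 0 < γ)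
    (𝕄 : Finset (Finset (Fin p)))
    (Sstar : Finset (Fin p)) (hSstar : Sstar ∈ 𝕄)
    (hmax : ∀ S ∈ 𝕄,
      ‖restrict (-(Real.sqrt t / γ) • sbar) S‖ ^ 2 ≤
        ‖restrict (-(Real.sqrt t / γ) • sbar) Sstar‖ ^ 2) :
    (∃ S ∈ 𝕄, ∀ i, (restrict (-(Real.sqrt t / γ) • sbar) Sstar) i ≠ 0 → i ∈ S) ∧
    ∀ w : EuclideanSpace ℝ (Fin p), (∃ S ∈ 𝕄, ∀ i, w i ≠ 0 → i ∈ S) →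
      ⟪sbar, restrict (-(Real.sqrt t / γ) • sbar) Sstar⟫ +
          (γ / (2 * Real.sqrt t)) * ‖restrict (-(Real.sqrt t / γ) • sbar) Sstar‖ ^ 2 ≤
        ⟪sbar, w⟫ + (γ / (2 * Real.sqrt t)) * ‖w‖ ^ 2 := by
  set v := -(Real.sqrt t / γ) • sbar
  refine ⟨⟨Sstar, hSstar, fun i => mem_of_restrict_apply_ne_zero v Sstar⟩, ?_⟩
  rintro w ⟨S, hS, hw⟩
  have hsqrt : 0 < Real.sqrt t := Real.sqrt_pos.mpr ht
  set k := γ / (2 * Real.sqrt t)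
  have hsbar : sbar = -(2 * k) • v := by
    have hk : 2 * k * (Real.sqrt t / γ) = 1 := by simp only [k]; field_simp
    rw [smul_smul, neg_mul_neg, hk, one_smul]
  rw [hsbar, inner_neg_smul_add_mul_norm_sq, inner_neg_smul_add_mul_norm_sq]
  gcongr k * (?_ - _)
  exact norm_restrict_sub_sq_le_of_norm_sq_le v Sstar (hmax S hS) hw

theorem stmt_11 {p : ℕ} (sbar : EuclideanSpace ℝ (Fin p)) (t γ : ℝ) (ht : 0 < t) (hγ : 0 < γ)
    (𝕄 : Finset (Finset (Fin p))) (h𝕄 : 𝕄.Nonempty)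
    (Sstar : Finset (Fin p)) (hSstar : Sstar ∈ 𝕄)
    (hmax : ∀ S ∈ 𝕄,
      ‖restrict (-(Real.sqrt t / γ) • sbar) S‖ ^ 2 ≤
        ‖restrict (-(Real.sqrt t / γ) • sbar) Sstar‖ ^ 2) :
    (∃ S ∈ 𝕄, ∀ i, (restrict (-(Real.sqrt t / γ) • sbar) Sstar) i ≠ 0 → i ∈ S) ∧
    ∀ w : EuclideanSpace ℝ (Fin p), (∃ S ∈ 𝕄, ∀ i, w i ≠ 0 → i ∈ S) →
      ⟪sbar, restrict (-(Real.sqrt t / γ) • sbar) Sstar⟫ +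
          (γ / (2 * Real.sqrt t)) * ‖restrict (-(Real.sqrt t / γ) • sbar) Sstar‖ ^ 2 ≤
        ⟪sbar, w⟫ + (γ / (2 * Real.sqrt t)) * ‖w‖ ^ 2 :=
  stmt_11_general sbar t γ ht hγ 𝕄 Sstar hSstar hmax
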